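/- arXiv:2012.05804 — 3 statements merged into one kernel-verified Lean document; each statement's English description precedes it below -/
import Mathlib

section
/- If the initial values of all ten compartments are nonnegative, all transition rates lie in [0,1], the sums of outflow rates from each compartment are at most 1 (i.e., i_r+i_h+i_u ≤ 1, h_u+h_f+h_a ≤ 1, u_f+u_hu ≤ 1, i_l ≤ 1, hu_a ≤ 1), β(t)I(t)/P_T ≤ 1 for all t, and s_q(t) ≤ S(t)(1 - β(t)I(t)/P_T) and q_s(t) ≤ Q(t) at each step, then all compartments remain nonnegative for all time. -/
/-- Nonnegativity of all compartments is preserved under the stated rate conditions. -/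
theorem seir_nonnegativity_preserved
    (S Q L I R H U F HU A : ℕ → ℝ)
    (qs sq il ir ih iu hu hf ha uf uhu hua β : ℕ → ℝ)
    (PT : ℝ) (hPT : 0 < PT)
    (hS : ∀ t, S (t + 1) = S t + qs t - sq t - β t * S t * (I t / PT))
    (hQ : ∀ t, Q (t + 1) = Q t + sq t - qs t)
    (hL : ∀ t, L (t + 1) = L t + β t * S t * (I t / PT) - il t * L t)
    (hI : ∀ t, I (t + 1) = I t + il t * L t - (ir t + ih t + iu t) * I t)
    (hR : ∀ t, R (t + 1) = R t + ir t * I t)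
    (hH : ∀ t, H (t + 1) = H t + ih t * I t - (hu t + hf t + ha t) * H t)
    (hU : ∀ t, U (t + 1) = U t + iu t * I t + hu t * H t - (uf t + uhu t) * U t)
    (hF : ∀ t, F (t + 1) = F t + hf t * H t + uf t * U t)
    (hHU : ∀ t, HU (t + 1) = HU t + uhu t * U t - hua t * HU t)
    (hA : ∀ t, A (t + 1) = A t + ha t * H t + hua t * HU t)
    (hinit : 0 ≤ S 0 ∧ 0 ≤ Q 0 ∧ 0 ≤ L 0 ∧ 0 ≤ I 0 ∧ 0 ≤ R 0 ∧ 0 ≤ H 0 ∧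
      0 ≤ U 0 ∧ 0 ≤ F 0 ∧ 0 ≤ HU 0 ∧ 0 ≤ A 0)
    (hrates : ∀ t, il t ∈ Set.Icc (0:ℝ) 1 ∧ ir t ∈ Set.Icc (0:ℝ) 1 ∧
      ih t ∈ Set.Icc (0:ℝ) 1 ∧ iu t ∈ Set.Icc (0:ℝ) 1 ∧ hu t ∈ Set.Icc (0:ℝ) 1 ∧
      hf t ∈ Set.Icc (0:ℝ) 1 ∧ ha t ∈ Set.Icc (0:ℝ) 1 ∧ uf t ∈ Set.Icc (0:ℝ) 1 ∧
      uhu t ∈ Set.Icc (0:ℝ) 1 ∧ hua t ∈ Set.Icc (0:ℝ) 1 ∧ 0 ≤ β t)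
    (hrowI : ∀ t, ir t + ih t + iu t ≤ 1)
    (hrowH : ∀ t, hu t + hf t + ha t ≤ 1)
    (hrowU : ∀ t, uf t + uhu t ≤ 1)
    (hβI : ∀ t, β t * I t / PT ≤ 1)
    (hsq : ∀ t, sq t ≤ S t * (1 - β t * I t / PT))
    (hqsQ : ∀ t, qs t ≤ Q t)
    (hsq0 : ∀ t, 0 ≤ sq t) (hqs0 : ∀ t, 0 ≤ qs t) :
    ∀ t, 0 ≤ S t ∧ 0 ≤ Q t ∧ 0 ≤ L t ∧ 0 ≤ I t ∧ 0 ≤ R t ∧ 0 ≤ H t ∧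
      0 ≤ U t ∧ 0 ≤ F t ∧ 0 ≤ HU t ∧ 0 ≤ A t := by
  intro t
  induction t with
  | zero => exact hinit
  | succ t ih2 =>
    obtain ⟨hS0, hQ0, hL0, hI0, hR0, hH0, hU0, hF0, hHU0, hA0⟩ := ih2
    obtain ⟨⟨hil0, hil1⟩, ⟨hir0, _⟩, ⟨hih0, _⟩, ⟨hiu0, _⟩, ⟨hhu0, _⟩,
      ⟨hhf0, _⟩, ⟨hha0, _⟩, ⟨huf0, _⟩, ⟨huhu0, _⟩, ⟨hhua0, hhua1⟩, hβ0⟩ := hrates t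
    have hPT' : (0:ℝ) < PT⁻¹ := inv_pos.mpr hPT
    have hβSI : 0 ≤ β t * S t * (I t / PT) := by positivity
    have hflow : β t * S t * (I t / PT) = S t * (β t * I t / PT) := by ring
    refine ⟨?_, ?_, ?_, ?_, ?_, ?_, ?_, ?_, ?_, ?_⟩
    · rw [hS t, hflow]
      have h1 : sq t ≤ S t - S t * (β t * I t / PT) := by
        have := hsq t; nlinarith
      have := hqs0 t; linarith
    · rw [hQ t]; have := hqsQ t; have := hsq0 t; linarith
    · rw [hL t]
      have h1 : il t * L t ≤ L t := mul_le_of_le_one_left hL0 hil1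
      linarith
    · rw [hI t]
      have h1 : (ir t + ih t + iu t) * I t ≤ I t :=
        mul_le_of_le_one_left hI0 (hrowI t)
      have h2 : 0 ≤ il t * L t := mul_nonneg hil0 hL0
      linarith
    · rw [hR t]; have := mul_nonneg hir0 hI0; linarith
    · rw [hH t]
      have h1 : (hu t + hf t + ha t) * H t ≤ H t :=
        mul_le_of_le_one_left hH0 (hrowH t)
      have h2 : 0 ≤ ih t * I t := mul_nonneg hih0 hI0
      linarith
    · rw [hU t]
      have h1 : (uf t + uhu t) * U t ≤ U t :=
        mul_le_of_le_one_left hU0 (hrowU t)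
      have h2 : 0 ≤ iu t * I t := mul_nonneg hiu0 hI0
      have h3 : 0 ≤ hu t * H t := mul_nonneg hhu0 hH0
      linarith
    · rw [hF t]
      have h1 : 0 ≤ hf t * H t := mul_nonneg hhf0 hH0
      have h2 : 0 ≤ uf t * U t := mul_nonneg huf0 hU0
      linarith
    · rw [hHU t]
      have h1 : hua t * HU t ≤ HU t := mul_le_of_le_one_left hHU0 hhua1
      have h2 : 0 ≤ uhu t * U t := mul_nonneg huhu0 hU0
      linarith
    · rw [hA t]
      have h1 : 0 ≤ ha t * H t := mul_nonneg hha0 hH0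
      have h2 : 0 ≤ hua t * HU t := mul_nonneg hhua0 hHU0
      linarith
end

section
/- In the SEIR-type model with constant parameters and no quarantine flows (s_q = q_s = 0), if R_0 := β/(i_r+i_h+i_u) < 1 and S(t) ≤ P_T for all t, then for any nonnegative initial data the sequence L(t)+I(t) converges to 0 as t → ∞, provided 0 < i_l ≤ 1 and 0 < i_r+i_h+i_u ≤ 1. -/
/-! Pick `b` with `R₀ < b < 1` and weight the infectious class by `b`: for `V = L + b I` the new
infections `β S I / P_T ≤ β I` are outweighed by the weighted removals `b γ I > β I`, while
the latent flow `i_l L` into `I` loses the factor `1 - b`. Hence `V(t+1) ≤ (1 - ε) V(t)` for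
some `ε > 0`, so `V`, and with it `L + I ≤ V / b`, decays geometrically. -/

open Filter Topology

theorem tendsto_zero_of_le_mul_of_lt_one {u : ℕ → ℝ} {c : ℝ} (hu : ∀ n, 0 ≤ u n)
    (hc : c < 1) (h : ∀ n, u (n + 1) ≤ c * u n) : Tendsto u atTop (𝓝 0) := by
  have hstep (n : ℕ) : u (n + 1) ≤ max c 0 * u n :=
    (h n).trans (mul_le_mul_of_nonneg_right (le_max_left c 0) (hu n))
  have hgeom : Tendsto (fun n ↦ max c 0 ^ n * u 0) atTop (𝓝 0) := by
    simpa using (tendsto_pow_atTop_nhds_zero_of_lt_one (le_max_right c 0)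
      (max_lt hc zero_lt_one)).mul_const (u 0)
  exact squeeze_zero hu (fun n ↦ le_geom (le_max_right c 0) n fun k _ ↦ hstep k) hgeom

lemma mul_mul_div_le_mul {β S I PT : ℝ} (hβ : 0 ≤ β) (hPT : 0 < PT) (hS : S ≤ PT)
    (hI : 0 ≤ I) : β * S * I / PT ≤ β * I := by
  rw [div_le_iff₀ hPT]
  nlinarith [mul_nonneg (mul_nonneg hβ hI) (sub_nonneg.mpr hS)]

lemma latent_add_weighted_infectious_step_le {L I J β il γ b ε : ℝ} (hL : 0 ≤ L)
    (hI : 0 ≤ I) (hJ : J ≤ β * I) (hb1 : b ≤ 1) (hε : 0 ≤ ε) (hεL : ε ≤ il * (1 - b))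
    (hεI : ε ≤ b * γ - β) :
    (L + J - il * L) + b * (I + il * L - γ * I) ≤ (1 - ε) * (L + b * I) := by
  nlinarith [mul_le_mul_of_nonneg_right hεL hL, mul_le_mul_of_nonneg_right hεI hI,
    mul_nonneg (mul_nonneg hε (sub_nonneg.mpr hb1)) hI]

theorem seir_extinction_of_infection_general
    (S L I : ℕ → ℝ) (β il ir ih iu PT : ℝ) (hPT : 0 < PT)
    (hβ : 0 < β) (hil : 0 < il)
    (hγ : 0 < ir + ih + iu)
    (hL : ∀ t, L (t + 1) = L t + β * S t * I t / PT - il * L t)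
    (hI : ∀ t, I (t + 1) = I t + il * L t - (ir + ih + iu) * I t)
    (hLpos : ∀ t, 0 ≤ L t) (hIpos : ∀ t, 0 ≤ I t)
    (hSbound : ∀ t, S t ≤ PT)
    (hR0 : β / (ir + ih + iu) < 1) :
    Filter.Tendsto (fun t => L t + I t) Filter.atTop (nhds 0) := by
  set γ := ir + ih + iu
  obtain ⟨b, hR0b, hb1⟩ := exists_between hR0
  have hb : 0 < b := (div_pos hβ hγ).trans hR0b
  have hβb : β < b * γ := (div_lt_iff₀ hγ).mp hR0b
  set ε := min (il * (1 - b)) (b * γ - β)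
  have hε : 0 < ε := lt_min (mul_pos hil (by linarith)) (by linarith)
  have hV : Tendsto (fun t ↦ L t + b * I t) atTop (𝓝 0) := by
    refine tendsto_zero_of_le_mul_of_lt_one (c := 1 - ε)
      (fun t ↦ add_nonneg (hLpos t) (mul_nonneg hb.le (hIpos t))) (by linarith) fun t ↦ ?_
    rw [hL t, hI t]
    exact latent_add_weighted_infectious_step_le (hLpos t) (hIpos t)
      (mul_mul_div_le_mul hβ.le hPT (hSbound t) (hIpos t)) hb1.le hε.le
      (min_le_left _ _) (min_le_right _ _)
  have hLI (t : ℕ) : L t + I t ≤ b⁻¹ * (L t + b * I t) := by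
    rw [mul_add, ← mul_assoc, inv_mul_cancel₀ hb.ne', one_mul]
    have := le_mul_of_one_le_left (hLpos t) ((one_le_inv₀ hb).mpr hb1.le)
    linarith
  exact squeeze_zero (fun t ↦ add_nonneg (hLpos t) (hIpos t)) hLI
    (by simpa using hV.const_mul b⁻¹)

/-- If R₀ < 1 then L(t)+I(t) → 0 in the constant-parameter model. -/
theorem seir_extinction_of_infection
    (S L I : ℕ → ℝ) (β il ir ih iu PT : ℝ) (hPT : 0 < PT)
    (hβ : 0 < β) (hil : 0 < il) (hil1 : il ≤ 1)
    (hγ : 0 < ir + ih + iu) (hγ1 : ir + ih + iu ≤ 1)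
    (hS : ∀ t, S (t + 1) = S t - β * S t * I t / PT)
    (hL : ∀ t, L (t + 1) = L t + β * S t * I t / PT - il * L t)
    (hI : ∀ t, I (t + 1) = I t + il * L t - (ir + ih + iu) * I t)
    (hSpos : ∀ t, 0 ≤ S t) (hLpos : ∀ t, 0 ≤ L t) (hIpos : ∀ t, 0 ≤ I t)
    (hSbound : ∀ t, S t ≤ PT)
    (hR0 : β / (ir + ih + iu) < 1) :
    Filter.Tendsto (fun t => L t + I t) Filter.atTop (nhds 0) :=
  seir_extinction_of_infection_general S L I β il ir ih iu PT hPT hβ hil hγ hL hI hLpos hIpos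
    hSbound hR0
end

section
/- In the constant-parameter model with no quarantine flows, if β < i_r+i_h+i_u (i.e., R_0 < 1) and S(t) ≤ P_T, then there exist constants ρ ∈ (0,1) and c > 0 such that c·L(t+1)+I(t+1) ≤ ρ·(c·L(t)+I(t)) for all t. -/
/-- Linear comparison: there exist c > 0 and ρ ∈ (0,1) with
c·L(t+1)+I(t+1) ≤ ρ·(c·L(t)+I(t)). -/
theorem seir_linear_comparison
    (S L I : ℕ → ℝ) (β il γ PT : ℝ) (hPT : 0 < PT)
    (hil : 0 < il) (hil1 : il ≤ 1) (hγ : 0 < γ) (hγ1 : γ ≤ 1)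
    (hβ : 0 ≤ β) (hβγ : β < γ)
    (hL : ∀ t, L (t + 1) = (1 - il) * L t + β * S t * I t / PT)
    (hI : ∀ t, I (t + 1) = il * L t + (1 - γ) * I t)
    (hSpos : ∀ t, 0 ≤ S t) (hSbound : ∀ t, S t ≤ PT)
    (hLpos : ∀ t, 0 ≤ L t) (hIpos : ∀ t, 0 ≤ I t) :
    ∃ ρ ∈ Set.Ioo (0:ℝ) 1, ∃ c > (0:ℝ),
      ∀ t, c * L (t + 1) + I (t + 1) ≤ ρ * (c * L t + I t) := by
  obtain ⟨c, hc1, hcβ⟩ : ∃ c : ℝ, 1 < c ∧ c * β < γ := by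
    refine ⟨1 + (γ - β) / (2 * (β + 1)), by
        have : 0 < (γ - β) / (2 * (β + 1)) := div_pos (by linarith) (by positivity)
        linarith, ?_⟩
    have hβ1 : (0:ℝ) < 2 * (β + 1) := by linarith
    rw [add_mul, one_mul, div_mul_eq_mul_div, ← lt_sub_iff_add_lt',
      div_lt_iff₀ hβ1]
    nlinarith
  have hc0 : (0:ℝ) < c := by linarith
  obtain ⟨ρ, h1, h2, hρ0, hρ1⟩ :
      ∃ ρ : ℝ, c - (c - 1) * il ≤ ρ * c ∧ c * β + 1 - γ ≤ ρ ∧ 0 < ρ ∧ ρ < 1 := by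
    refine ⟨max ((c - (c - 1) * il) / c) (c * β + 1 - γ), ?_, le_max_right _ _, ?_, ?_⟩
    · have h := le_max_left ((c - (c - 1) * il) / c) (c * β + 1 - γ)
      rw [div_le_iff₀ hc0] at h
      exact h
    · have hnum : 0 < c - (c - 1) * il := by nlinarith
      exact lt_of_lt_of_le (by positivity) (le_max_left _ _)
    · apply max_lt
      · rw [div_lt_one hc0]; nlinarith
      · linarith
  refine ⟨ρ, ⟨hρ0, hρ1⟩, c, hc0, fun t => ?_⟩
  have hinf : β * S t * I t / PT ≤ β * I t := by
    rw [div_le_iff₀ hPT]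
    nlinarith [mul_nonneg (mul_nonneg hβ (sub_nonneg.2 (hSbound t))) (hIpos t)]
  rw [hL t, hI t]
  nlinarith [mul_le_mul_of_nonneg_left hinf hc0.le,
    mul_le_mul_of_nonneg_right h1 (hLpos t),
    mul_le_mul_of_nonneg_right h2 (hIpos t)]
end
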